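/- arXiv:2409.06588 — 9 statements merged into one kernel-verified Lean document; each statement's English description precedes it below -/
import Mathlib

section
/- A system G is high-order opaque with respect to T_spec, H_a and H_o if and only if G satisfies the epistemic property ⟨∀, Dis_o, T, U⟩, i.e., for every s ∈ L(G) with Dis_o(H_o(s)) = T, the high-level estimate of the knowledge satisfies K̂w_ao(H_a(s)) = U. -/
open Set

/-- Current-state estimate X̂(α) = {δ(s) : s ∈ L, H(s) = α}. -/
def est {E O X : Type*} (L : Set (List E)) (δ : List E → X) (H : List E → List O)
    (α : List O) : Set X :=
  {x | ∃ s ∈ L, H s = α ∧ δ s = x}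

/-- Distinguishability: Dis(q) = T iff (q × q) ∩ T_spec = ∅. -/
def Dis {X : Type*} (Tspec : Set (X × X)) (q : Set X) : Prop :=
  (q ×ˢ q) ∩ Tspec = ∅

/-- High-order opacity is equivalent to the epistemic property ⟨∀, Dis_o, T, U⟩. -/
theorem stmt_3 {E O1 O2 X : Type*} (L : Set (List E)) (δ : List E → X)
    (Ho : List E → List O1) (Ha : List E → List O2) (Tspec : Set (X × X)) :
    ((∀ s ∈ L, Dis Tspec (est L δ Ho (Ho s)) →
        ∃ t ∈ L, ¬ Dis Tspec (est L δ Ho (Ho t)) ∧ Ha s = Ha t)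
      ↔
     (∀ s ∈ L, Dis Tspec (est L δ Ho (Ho s)) →
        (¬ (∀ t ∈ L, Ha t = Ha s → Dis Tspec (est L δ Ho (Ho t))) ∧
         ¬ (∀ t ∈ L, Ha t = Ha s → ¬ Dis Tspec (est L δ Ho (Ho t)))))) := by
  constructor
  · intro h s hs hd
    obtain ⟨t, ht, hnd, hab⟩ := h s hs hd
    exact ⟨fun H => hnd (H t ht hab.symm), fun H => H s hs rfl hd⟩
  · intro h s hs hd
    obtain ⟨h1, _⟩ := h s hs hd
    push_neg at h1
    obtain ⟨t, ht, hab, hnd⟩ := h1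
    exact ⟨t, ht, hnd, hab.symm⟩
end

section
/- In the knowledge recognizer T_o of a system G, for every string s ∈ L(G), the reached state satisfies f(s) = (δ(s), X̂_o(H_o(s))), i.e., the second component of the recognizer state equals the current-state estimate of G under observation H_o(s). -/
structure PDFA (X E : Type*) where
  step : X → E → Option X
  init : X

def PDFA.runFrom {X E : Type*} (G : PDFA X E) (x : X) (s : List E) : Option X :=
  s.foldl (fun ox e => ox.bind fun x' => G.step x' e) (some x)

def PDFA.run {X E : Type*} (G : PDFA X E) (s : List E) : Option X :=
  G.runFrom G.init s

def PDFA.lang {X E : Type*} (G : PDFA X E) : Set (List E) :=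
  {s | (G.run s).isSome}

def obs {E O : Type*} (H : E → Option O) (s : List E) : List O := s.filterMap H

def estimate {X E O : Type*} (G : PDFA X E) (H : E → Option O) (α : List O) : Set X :=
  {x | ∃ s ∈ G.lang, obs H s = α ∧ G.run s = some x}

/-- Initial state q₀ = (x₀, {δ(w) : w ∈ Σ_uo*}) of the knowledge recognizer. -/
def recInit {X E O : Type*} (G : PDFA X E) (Ho : E → Option O) : X × Set X :=
  (G.init, {x | ∃ w : List E, obs Ho w = [] ∧ G.run w = some x})

/-- Transition function of the knowledge recognizer: on an observable event the
estimate component is updated, on an unobservable event it is kept. -/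
def recStep {X E O : Type*} (G : PDFA X E) (Ho : E → Option O)
    (q : X × Set X) (σ : E) : Option (X × Set X) :=
  (G.step q.1 σ).map fun x' =>
    (x',
      if (Ho σ).isSome then
        {x'' | ∃ x0 ∈ q.2, ∃ w : List E, obs Ho w = obs Ho [σ] ∧ G.runFrom x0 w = some x''}
      else q.2)

/-- Extended transition function f of the knowledge recognizer from q₀. -/
def recRun {X E O : Type*} (G : PDFA X E) (Ho : E → Option O) (s : List E) :
    Option (X × Set X) :=
  s.foldl (fun oq σ => oq.bind fun q => recStep G Ho q σ) (some (recInit G Ho))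

section Aux

variable {X E O : Type*}

lemma foldl_none (G : PDFA X E) (w : List E) :
    w.foldl (fun ox e => ox.bind fun x' => G.step x' e) none = none := by
  induction w with
  | nil => rfl
  | cons a w ih => simpa using ih

lemma runFrom_append (G : PDFA X E) (x : X) (u w : List E) :
    G.runFrom x (u ++ w) = (G.runFrom x u).bind (fun y => G.runFrom y w) := by
  unfold PDFA.runFrom
  rw [List.foldl_append]
  cases h : u.foldl (fun ox e => ox.bind fun x' => G.step x' e) (some x) with
  | none => simpa using foldl_none G w
  | some y => rfl

lemma run_append (G : PDFA X E) (u w : List E) :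
    G.run (u ++ w) = (G.run u).bind (fun y => G.runFrom y w) :=
  runFrom_append G G.init u w

lemma recRun_append_singleton (G : PDFA X E) (Ho : E → Option O) (s : List E) (σ : E) :
    recRun G Ho (s ++ [σ]) = (recRun G Ho s).bind fun q => recStep G Ho q σ := by
  simp [recRun, List.foldl_append]

lemma estimate_nil (G : PDFA X E) (Ho : E → Option O) :
    estimate G Ho [] = {x | ∃ w : List E, obs Ho w = [] ∧ G.run w = some x} := by
  ext x
  constructor
  · rintro ⟨s, _, ho, hr⟩; exact ⟨s, ho, hr⟩
  · rintro ⟨s, ho, hr⟩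
    exact ⟨s, by simp [PDFA.lang, hr], ho, hr⟩

lemma estimate_snoc (G : PDFA X E) (Ho : E → Option O) (α : List O) (o : O) :
    estimate G Ho (α ++ [o]) =
      {x'' | ∃ x0 ∈ estimate G Ho α, ∃ w : List E,
        obs Ho w = [o] ∧ G.runFrom x0 w = some x''} := by
  ext x
  constructor
  · rintro ⟨s, _, ho, hr⟩
    obtain ⟨u, w, rfl, hu, hw⟩ := List.filterMap_eq_append_iff.mp ho
    rw [run_append] at hr
    cases hru : G.run u with
    | none => rw [hru] at hr; simp at hr
    | some y =>
      rw [hru] at hr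
      exact ⟨y, ⟨u, by simp [PDFA.lang, hru], hu, hru⟩, w, hw, hr⟩
  · rintro ⟨x0, ⟨u, _, hu, hru⟩, w, hw, hrw⟩
    refine ⟨u ++ w, ?_, ?_, ?_⟩
    · simp [PDFA.lang, run_append, hru, hrw]
    · simp [obs, List.filterMap_append] at *; simp [hu, hw]
    · simp [run_append, hru, hrw]

end Aux

/-- For every s ∈ L(G), f(s) = (δ(s), X̂_o(H_o(s))). -/
theorem stmt_8 {X E O : Type*} (G : PDFA X E) (Ho : E → Option O) :
    ∀ s ∈ G.lang, ∀ x : X, G.run s = some x →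
      recRun G Ho s = some (x, estimate G Ho (obs Ho s)) := by
  intro s
  induction s using List.reverseRecOn with
  | nil =>
    intro _ x hx
    have : x = G.init := by simpa [PDFA.run, PDFA.runFrom] using hx.symm
    subst this
    simp [recRun, recInit, obs, estimate_nil]
  | append_singleton t σ ih =>
    intro hl x hx
    rw [run_append] at hx
    cases hrt : G.run t with
    | none => rw [hrt] at hx; simp at hx
    | some y =>
      rw [hrt] at hx
      have hstep : G.step y σ = some x := by simpa [PDFA.runFrom] using hx
      have ht : recRun G Ho t = some (y, estimate G Ho (obs Ho t)) :=
        ih (by simp [PDFA.lang, hrt]) y hrt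
      rw [recRun_append_singleton, ht]
      cases hσ : Ho σ with
      | none =>
        simp [recStep, hstep, hσ, obs, List.filterMap_append]
      | some o =>
        simp only [Option.bind_some, recStep, hstep, hσ, Option.isSome_some, if_true,
          Option.map_some]
        have hobs : obs Ho (t ++ [σ]) = obs Ho t ++ [o] := by
          simp [obs, List.filterMap_append, hσ]
        rw [hobs, estimate_snoc]
        have : obs Ho [σ] = [o] := by simp [obs, hσ]
        rw [this]
end

section
/- Using the double-estimator: for any α ∈ H_a(L(G)), K̂w_ao(α) = Y if f_D(α) ⊆ Q_T, K̂w_ao(α) = N if f_D(α) ⊆ Q_F, and K̂w_ao(α) = U otherwise, where Q_T (resp. Q_F) is the set of recognizer states (x,y) with Kw_o(y) = T (resp. F). -/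
open Set

/-- The knowledge-recognizer state reached by s: f(s) = (δ(s), X̂_o(H_o(s))). -/
def recMap {E O X : Type*} (L : Set (List E)) (δ : List E → X)
    (Ho : List E → List O) (s : List E) : X × Set X :=
  (δ s, est L δ Ho (Ho s))

/-- Double-estimator state reached by observation α:
f_D(α) = {f(s) : s ∈ L(G), H_a(s) = α}. -/
def fDabs {E O1 O2 X : Type*} (L : Set (List E)) (δ : List E → X)
    (Ho : List E → List O1) (Ha : List E → List O2) (α : List O2) :
    Set (X × Set X) :=
  {q | ∃ s ∈ L, Ha s = α ∧ q = recMap L δ Ho s}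

/-- Characterization of K̂w_ao via the double-estimator: Y iff f_D(α) ⊆ Q_T,
N iff f_D(α) ⊆ Q_F, U otherwise. -/
theorem stmt_10 {E O1 O2 X : Type*} (L : Set (List E)) (δ : List E → X)
    (Ho : List E → List O1) (Ha : List E → List O2) (Kw : Set X → Prop) :
    ∀ α ∈ Ha '' L,
      ((∀ s ∈ L, Ha s = α → Kw (est L δ Ho (Ho s))) ↔
          fDabs L δ Ho Ha α ⊆ {q : X × Set X | Kw q.2}) ∧
      ((∀ s ∈ L, Ha s = α → ¬ Kw (est L δ Ho (Ho s))) ↔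
          fDabs L δ Ho Ha α ⊆ {q : X × Set X | ¬ Kw q.2}) ∧
      ((¬ (∀ s ∈ L, Ha s = α → Kw (est L δ Ho (Ho s))) ∧
        ¬ (∀ s ∈ L, Ha s = α → ¬ Kw (est L δ Ho (Ho s)))) ↔
          (¬ fDabs L δ Ho Ha α ⊆ {q : X × Set X | Kw q.2} ∧
           ¬ fDabs L δ Ho Ha α ⊆ {q : X × Set X | ¬ Kw q.2})) := by
  intro α hα
  have h : ∀ P : Set X → Prop,
      ((∀ s ∈ L, Ha s = α → P (est L δ Ho (Ho s))) ↔
        fDabs L δ Ho Ha α ⊆ {q : X × Set X | P q.2}) := by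
    intro P
    constructor
    · rintro h q ⟨s, hs, hHa, rfl⟩
      exact h s hs hHa
    · intro h s hs hHa
      exact h ⟨s, hs, hHa, rfl⟩
  refine ⟨h Kw, h (fun y => ¬ Kw y), ?_⟩
  rw [h Kw, h (fun y => ¬ Kw y)]
end

section
/- G satisfies the epistemic property ⟨∀, Kw_o, T, U⟩ if and only if no reachable state q_D of the double-estimator satisfies q_D ⊆ Q_T. -/
open Set

/-- G ⊨ ⟨∀, Kw_o, T, U⟩ iff no reachable double-estimator state is contained in Q_T. -/
theorem stmt_11 {E O1 O2 X : Type*} (L : Set (List E)) (δ : List E → X)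
    (Ho : List E → List O1) (Ha : List E → List O2) (Kw : Set X → Prop) :
    ((∀ s ∈ L, Kw (est L δ Ho (Ho s)) →
        ∃ t ∈ L, Ha t = Ha s ∧ ¬ Kw (est L δ Ho (Ho t)))
      ↔
     (∀ α ∈ Ha '' L, ¬ fDabs L δ Ho Ha α ⊆ {q : X × Set X | Kw q.2})) := by
  constructor
  · rintro h α ⟨s, hs, rfl⟩ hsub
    by_cases hk : Kw (est L δ Ho (Ho s))
    · obtain ⟨t, ht, hta, hnk⟩ := h s hs hk
      exact hnk (hsub ⟨t, ht, hta, rfl⟩)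
    · exact hk (hsub ⟨s, hs, rfl, rfl⟩)
  · intro h s hs hk
    have := h (Ha s) ⟨s, hs, rfl⟩
    rw [Set.not_subset] at this
    obtain ⟨q, ⟨t, ht, hta, rfl⟩, hq⟩ := this
    exact ⟨t, ht, hta, hq⟩
end

section
/- G satisfies the epistemic property ⟨∃, Kw_o, T, Y⟩ (i.e., there exists s ∈ L(G) with Kw_o holding at s and the high-level observer certain of this) if and only if some reachable state q_D of the double-estimator satisfies q_D ⊆ Q_T. -/
open Set

/-- G ⊨ ⟨∃, Kw_o, T, Y⟩ iff some reachable double-estimator state is contained in Q_T. -/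
theorem stmt_12 {E O1 O2 X : Type*} (L : Set (List E)) (δ : List E → X)
    (Ho : List E → List O1) (Ha : List E → List O2) (Kw : Set X → Prop) :
    ((∃ s ∈ L, Kw (est L δ Ho (Ho s)) ∧
        ∀ t ∈ L, Ha t = Ha s → Kw (est L δ Ho (Ho t)))
      ↔
     (∃ α ∈ Ha '' L, fDabs L δ Ho Ha α ⊆ {q : X × Set X | Kw q.2})) := by
  constructor
  · rintro ⟨s, hs, _, hall⟩
    refine ⟨Ha s, ⟨s, hs, rfl⟩, ?_⟩
    rintro q ⟨t, ht, hta, rfl⟩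
    exact hall t ht hta
  · rintro ⟨α, ⟨s, hs, rfl⟩, hsub⟩
    refine ⟨s, hs, hsub ⟨s, hs, rfl, rfl⟩, fun t ht hta => hsub ⟨t, ht, hta, rfl⟩⟩
end

section
/- G satisfies the epistemic property ⟨∀, Kw_o, T, Y⟩ if and only if every reachable double-estimator state q_D satisfies q_D ⊆ Q_T or q_D ∩ Q_T = ∅. -/
open Set

/-- G ⊨ ⟨∀, Kw_o, T, Y⟩ iff every reachable double-estimator state q_D satisfies
q_D ⊆ Q_T or q_D ∩ Q_T = ∅. -/
theorem stmt_13 {E O1 O2 X : Type*} (L : Set (List E)) (δ : List E → X)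
    (Ho : List E → List O1) (Ha : List E → List O2) (Kw : Set X → Prop) :
    ((∀ s ∈ L, Kw (est L δ Ho (Ho s)) →
        ∀ t ∈ L, Ha t = Ha s → Kw (est L δ Ho (Ho t)))
      ↔
     (∀ α ∈ Ha '' L,
        fDabs L δ Ho Ha α ⊆ {q : X × Set X | Kw q.2} ∨
        fDabs L δ Ho Ha α ∩ {q : X × Set X | Kw q.2} = ∅)) := by
  constructor
  · intro h α hα
    by_cases hc : ∃ q ∈ fDabs L δ Ho Ha α, Kw q.2
    · left
      obtain ⟨q, ⟨s, hs, hHa, hq⟩, hKw⟩ := hc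
      rintro p ⟨t, ht, hHt, hp⟩
      subst hq hp
      exact h s hs hKw t ht (hHt.trans hHa.symm)
    · right
      ext q
      simp only [Set.mem_inter_iff, Set.mem_setOf_eq, Set.mem_empty_iff_false, iff_false]
      rintro ⟨hq, hKw⟩
      exact hc ⟨q, hq, hKw⟩
  · intro h s hs hKw t ht hte
    have hα : Ha s ∈ Ha '' L := ⟨s, hs, rfl⟩
    rcases h (Ha s) hα with hsub | hemp
    · exact hsub ⟨t, ht, hte, rfl⟩
    · exfalso
      have : recMap L δ Ho s ∈ fDabs L δ Ho Ha (Ha s) ∩ {q : X × Set X | Kw q.2} :=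
        ⟨⟨s, hs, rfl, rfl⟩, hKw⟩
      rw [hemp] at this
      exact this
end

section
/- G satisfies the epistemic property ⟨∀, Kw_o, T, Y⟩ if and only if every reachable state q_V of the twin-estimator satisfies: either both components of q_V are in Q_T, or both components are in Q_F. -/
open Set

/-- G ⊨ ⟨∀, Kw_o, T, Y⟩ iff every reachable twin-estimator state
(f(s₁), f(s₂)) (with s₁, s₂ ∈ L(G), H_a(s₁) = H_a(s₂)) has both components
in Q_T or both components in Q_F. -/
theorem stmt_15 {E O1 O2 X : Type*} (L : Set (List E)) (δ : List E → X)
    (Ho : List E → List O1) (Ha : List E → List O2) (Kw : Set X → Prop) :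
    ((∀ s ∈ L, Kw (est L δ Ho (Ho s)) →
        ∀ t ∈ L, Ha t = Ha s → Kw (est L δ Ho (Ho t)))
      ↔
     (∀ s1 ∈ L, ∀ s2 ∈ L, Ha s1 = Ha s2 →
        (recMap L δ Ho s1 ∈ {q : X × Set X | Kw q.2} ∧
         recMap L δ Ho s2 ∈ {q : X × Set X | Kw q.2}) ∨
        (recMap L δ Ho s1 ∉ {q : X × Set X | Kw q.2} ∧
         recMap L δ Ho s2 ∉ {q : X × Set X | Kw q.2}))) := by
  simp only [recMap, mem_setOf_eq, not_and, not_or]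
  constructor
  · intro h s1 hs1 s2 hs2 he
    by_cases h1 : Kw (est L δ Ho (Ho s1))
    · exact Or.inl ⟨h1, h s1 hs1 h1 s2 hs2 he.symm⟩
    · refine Or.inr ⟨h1, fun h2 => h1 (h s2 hs2 h2 s1 hs1 he)⟩
  · intro h s hs h1 t ht he
    rcases h s hs t ht he.symm with ⟨_, h2⟩ | ⟨h2, _⟩
    · exact h2
    · exact absurd h1 h2
end

section
/- In the state-pair-estimator Obs_P(G), for every s ∈ L(G), the reached state satisfies f_P(q_{0,P}, H_a(s)) = { (δ(t), (δ(w₁), δ(w₂))) : t, w₁, w₂ ∈ L(G), H_a(s) = H_a(t), H_o(t) = H_o(w₁) = H_o(w₂) }. -/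
/-- Transition function f_P of the state-pair-estimator. -/
def spStep {X E O1 O2 : Type*} (G : PDFA X E) (Ho : E → Option O1) (Ha : E → Option O2)
    (qP : Set (X × (X × X))) (o : O2) : Set (X × (X × X)) :=
  {p' | ∃ p ∈ qP, ∃ w w1 w2 : List E,
      obs Ha w = [o] ∧ obs Ho w = obs Ho w1 ∧ obs Ho w = obs Ho w2 ∧
      G.runFrom p.1 w = some p'.1 ∧ G.runFrom p.2.1 w1 = some p'.2.1 ∧
      G.runFrom p.2.2 w2 = some p'.2.2}

/-- Initial state q_{0,P} of the state-pair-estimator. -/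
def spInit {X E O1 O2 : Type*} (G : PDFA X E) (Ho : E → Option O1) (Ha : E → Option O2) :
    Set (X × (X × X)) :=
  {p | ∃ w w1 w2 : List E,
      obs Ha w = [] ∧ obs Ho w = obs Ho w1 ∧ obs Ho w = obs Ho w2 ∧
      G.run w = some p.1 ∧ G.run w1 = some p.2.1 ∧ G.run w2 = some p.2.2}

/-!
Induct on the attacker's observation, extended on the right. One estimator transition extends
the witness words `(t, w₁, w₂)` by segments carrying one more attacker observation and equal
operator observations, and runs concatenate. Conversely, witnesses for `l ++ [o]` are cut where
the last attacker observation begins: a word projecting to `L₁ ++ L₂` splits into a word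
projecting to `L₁` followed by one projecting to `L₂`, so `w₁` and `w₂` can be cut at the
matching point of their operator observation.
-/

namespace PDFA

variable {X E : Type*} (G : PDFA X E)

theorem foldl_step_none (s : List E) :
    s.foldl (fun ox e => ox.bind fun x' => G.step x' e) none = none := by
  induction s with
  | nil => rfl
  | cons _ _ ih => exact ih

theorem runFrom_append (x : X) (a b : List E) :
    G.runFrom x (a ++ b) = (G.runFrom x a).bind (G.runFrom · b) := by
  unfold runFrom
  rw [List.foldl_append]
  cases List.foldl (fun ox e => ox.bind fun x' => G.step x' e) (some x) a with
  | none => exact G.foldl_step_none b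
  | some _ => rfl

theorem run_append_eq_some {a b : List E} {y : X} :
    G.run (a ++ b) = some y ↔ ∃ x, G.run a = some x ∧ G.runFrom x b = some y := by
  rw [run, runFrom_append, Option.bind_eq_some_iff, ← run]

end PDFA

section Observation

variable {E O : Type*} (H : E → Option O)

theorem obs_append (a b : List E) : obs H (a ++ b) = obs H a ++ obs H b :=
  List.filterMap_append

theorem obs_eq_append_iff {w : List E} {L₁ L₂ : List O} :
    obs H w = L₁ ++ L₂ ↔ ∃ w₁ w₂, w = w₁ ++ w₂ ∧ obs H w₁ = L₁ ∧ obs H w₂ = L₂ :=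
  List.filterMap_eq_append_iff

end Observation

section StatePairEstimator

variable {X E O1 O2 : Type*} (G : PDFA X E) (Ho : E → Option O1) (Ha : E → Option O2)

def spReached (l : List O2) : Set (X × (X × X)) :=
  {p | ∃ t w1 w2 : List E,
      l = obs Ha t ∧ obs Ho t = obs Ho w1 ∧ obs Ho t = obs Ho w2 ∧
      G.run t = some p.1 ∧ G.run w1 = some p.2.1 ∧ G.run w2 = some p.2.2}

theorem spInit_eq_spReached_nil : spInit G Ho Ha = spReached G Ho Ha [] := by
  ext p
  constructor
  · rintro ⟨t, w1, w2, hA, h1, h2, r⟩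
    exact ⟨t, w1, w2, hA.symm, h1, h2, r⟩
  · rintro ⟨t, w1, w2, hA, h1, h2, r⟩
    exact ⟨t, w1, w2, hA.symm, h1, h2, r⟩

theorem spStep_spReached (l : List O2) (o : O2) :
    spStep G Ho Ha (spReached G Ho Ha l) o = spReached G Ho Ha (l ++ [o]) := by
  ext p'
  constructor
  · rintro ⟨p, ⟨t, w1, w2, hA, h1, h2, r0, r1, r2⟩, u, u1, u2, hu, hu1, hu2, s0, s1, s2⟩
    refine ⟨t ++ u, w1 ++ u1, w2 ++ u2, ?_, ?_, ?_, ?_, ?_, ?_⟩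
    · rw [obs_append, hA, hu]
    · rw [obs_append, obs_append, h1, hu1]
    · rw [obs_append, obs_append, h2, hu2]
    · exact (G.run_append_eq_some).2 ⟨_, r0, s0⟩
    · exact (G.run_append_eq_some).2 ⟨_, r1, s1⟩
    · exact (G.run_append_eq_some).2 ⟨_, r2, s2⟩
  · rintro ⟨t, w1, w2, hA, h1, h2, r0, r1, r2⟩
    obtain ⟨t, u, rfl, hAt, hAu⟩ := (obs_eq_append_iff Ha).1 hA.symm
    rw [obs_append] at h1 h2
    obtain ⟨w1, u1, rfl, hw1, hu1⟩ := (obs_eq_append_iff Ho).1 h1.symm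
    obtain ⟨w2, u2, rfl, hw2, hu2⟩ := (obs_eq_append_iff Ho).1 h2.symm
    obtain ⟨x, r0, s0⟩ := (G.run_append_eq_some).1 r0
    obtain ⟨y1, r1, s1⟩ := (G.run_append_eq_some).1 r1
    obtain ⟨y2, r2, s2⟩ := (G.run_append_eq_some).1 r2
    exact ⟨(x, y1, y2), ⟨t, w1, w2, hAt.symm, hw1.symm, hw2.symm, r0, r1, r2⟩,
      u, u1, u2, hAu, hu1.symm, hu2.symm, s0, s1, s2⟩

theorem foldl_spStep_spInit (l : List O2) :
    l.foldl (spStep G Ho Ha) (spInit G Ho Ha) = spReached G Ho Ha l := by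
  induction l using List.reverseRecOn with
  | nil => exact spInit_eq_spReached_nil G Ho Ha
  | append_singleton l o ih =>
    rw [List.foldl_append, ih]
    exact spStep_spReached G Ho Ha l o

end StatePairEstimator

/-- For every s ∈ L(G),
f_P(q_{0,P}, H_a(s)) = {(δ(t),(δ(w₁),δ(w₂))) : t,w₁,w₂ ∈ L(G),
H_a(s) = H_a(t), H_o(t) = H_o(w₁) = H_o(w₂)}. -/
theorem stmt_17 {X E O1 O2 : Type*} (G : PDFA X E)
    (Ho : E → Option O1) (Ha : E → Option O2) :
    ∀ s ∈ G.lang,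
      (obs Ha s).foldl (spStep G Ho Ha) (spInit G Ho Ha) =
        {p | ∃ t w1 w2 : List E,
            obs Ha s = obs Ha t ∧ obs Ho t = obs Ho w1 ∧ obs Ho t = obs Ho w2 ∧
            G.run t = some p.1 ∧ G.run w1 = some p.2.1 ∧ G.run w2 = some p.2.2} :=
  fun s _ => foldl_spStep_spInit G Ho Ha (obs Ha s)
end

section
/- G is high-order opaque (equivalently, satisfies ⟨∀, Dis_o, T, U⟩) if and only if every reachable state q_P of the state-pair-estimator intersects X × T_spec, i.e., the set Q_P^Y of reachable states with q_P ∩ (X × T_spec) = ∅ is empty. -/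
open Set

/-- State-pair-estimator state reached by observation α. -/
def fPabs {E O1 O2 X : Type*} (L : Set (List E)) (δ : List E → X)
    (Ho : List E → List O1) (Ha : List E → List O2) (α : List O2) :
    Set (X × (X × X)) :=
  {p | ∃ t ∈ L, ∃ w1 ∈ L, ∃ w2 ∈ L,
      Ha t = α ∧ Ho t = Ho w1 ∧ Ho t = Ho w2 ∧
      δ t = p.1 ∧ δ w1 = p.2.1 ∧ δ w2 = p.2.2}

/-- G is high-order opaque (⟨∀, Dis_o, T, U⟩) iff every reachable
state-pair-estimator state intersects X × T_spec. -/
theorem stmt_18 {E O1 O2 X : Type*} (L : Set (List E)) (δ : List E → X)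
    (Ho : List E → List O1) (Ha : List E → List O2) (Tspec : Set (X × X)) :
    ((∀ s ∈ L, Dis Tspec (est L δ Ho (Ho s)) →
        ∃ t ∈ L, Ha t = Ha s ∧ ¬ Dis Tspec (est L δ Ho (Ho t)))
      ↔
     (∀ α ∈ Ha '' L,
        (fPabs L δ Ho Ha α ∩ {p : X × (X × X) | p.2 ∈ Tspec}).Nonempty)) := by
  have hnot : ∀ q : Set X, ¬ Dis Tspec q ↔ ∃ a ∈ q, ∃ b ∈ q, (a, b) ∈ Tspec := by
    intro q
    unfold Dis
    rw [← ne_eq, ← Set.nonempty_iff_ne_empty]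
    constructor
    · rintro ⟨⟨a, b⟩, hab, hT⟩
      exact ⟨a, hab.1, b, hab.2, hT⟩
    · rintro ⟨a, ha, b, hb, hT⟩
      exact ⟨(a, b), ⟨ha, hb⟩, hT⟩
  constructor
  · intro h α hα
    obtain ⟨s, hs, rfl⟩ := hα
    by_cases hd : Dis Tspec (est L δ Ho (Ho s))
    · obtain ⟨t, ht, hat, hnd⟩ := h s hs hd
      obtain ⟨a, ⟨w1, hw1, hw1o, hw1d⟩, b, ⟨w2, hw2, hw2o, hw2d⟩, hT⟩ := (hnot _).1 hnd
      refine ⟨(δ t, (a, b)), ⟨t, ht, w1, hw1, w2, hw2, hat, hw1o.symm, hw2o.symm,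
        rfl, hw1d, hw2d⟩, ?_⟩
      exact hT
    · obtain ⟨a, ⟨w1, hw1, hw1o, hw1d⟩, b, ⟨w2, hw2, hw2o, hw2d⟩, hT⟩ := (hnot _).1 hd
      exact ⟨(δ s, (a, b)), ⟨s, hs, w1, hw1, w2, hw2, rfl, hw1o.symm, hw2o.symm,
        rfl, hw1d, hw2d⟩, hT⟩
  · intro h s hs _
    obtain ⟨p, ⟨t, ht, w1, hw1, w2, hw2, hat, ho1, ho2, _, hd1, hd2⟩, hT⟩ :=
      h (Ha s) ⟨s, hs, rfl⟩
    refine ⟨t, ht, hat, (hnot _).2 ⟨p.2.1, ⟨w1, hw1, ho1.symm, hd1⟩,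
      p.2.2, ⟨w2, hw2, ho2.symm, hd2⟩, ?_⟩⟩
    exact hT
end
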